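/- arXiv:2505.07695 — 2 statements merged into one kernel-verified Lean document; each statement's English description precedes it below -/
import Mathlib

section
/- For every ε > 0 there exists C > 0 such that for every δ ∈ (0,1) and every nonempty finite set 𝕋 of δ-tubes in ℝ² with Δ_max(𝕋) ≤ 1, one has μ(𝕋) ≤ C δ^{-ε}. (The 2-dimensional Kakeya estimate with convex Wolff axioms, provable by the L² method.) -/
open MeasureTheory Metric Bornology
open scoped RealInnerProductSpace ENNReal NNReal

noncomputable section

/-- A `δ`-tube in `ℝⁿ`: the closed `δ`-neighborhood of a unit line segment. -/
def IsTube {n : ℕ} (δ : ℝ) (T : Set (EuclideanSpace ℝ (Fin n))) : Prop :=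
  ∃ x v : EuclideanSpace ℝ (Fin n), ‖v‖ = 1 ∧
    T = {y | ∃ t ∈ Set.Icc (0 : ℝ) 1, dist y (x + t • v) ≤ δ}

/-- The density `Δ(𝕋, K)` of a finite family of sets in a convex set `K`. -/
def density {n : ℕ} (𝕋 : Finset (Set (EuclideanSpace ℝ (Fin n))))
    (K : Set (EuclideanSpace ℝ (Fin n))) : ℝ :=
  (∑ T ∈ 𝕋, Set.indicator {S : Set (EuclideanSpace ℝ (Fin n)) | S ⊆ K}
      (fun S => (volume S).toReal) T) / (volume K).toReal

/-- The multiplicity `μ(𝕋)`. -/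
def mult {n : ℕ} (𝕋 : Finset (Set (EuclideanSpace ℝ (Fin n)))) : ℝ :=
  (∑ T ∈ 𝕋, (volume T).toReal) / (volume (⋃ T ∈ 𝕋, T)).toReal

abbrev E2 := EuclideanSpace ℝ (Fin 2)

def perp (v : E2) : E2 := (WithLp.equiv 2 (Fin 2 → ℝ)).symm ![-v 1, v 0]

@[simp] lemma perp_apply_zero (v : E2) : perp v 0 = -v 1 := rfl
@[simp] lemma perp_apply_one (v : E2) : perp v 1 = v 0 := rfl

lemma inner_formula (x y : E2) : ⟪x, y⟫ = x 0 * y 0 + x 1 * y 1 := by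
  simp [PiLp.inner_apply, Fin.sum_univ_two, RCLike.inner_apply, mul_comm]

lemma norm_sq_formula (v : E2) : ‖v‖^2 = v 0 ^ 2 + v 1 ^ 2 := by
  rw [← real_inner_self_eq_norm_sq, inner_formula]; ring

example (v : E2) (hv : ‖v‖ = 1) : ‖perp v‖ = 1 := by
  have h := norm_sq_formula v
  have h2 := norm_sq_formula (perp v)
  rw [hv] at h
  simp only [perp_apply_zero, perp_apply_one] at h2
  nlinarith [norm_nonneg (perp v)]

lemma e2_ext {x y : E2} (h0 : x 0 = y 0) (h1 : x 1 = y 1) : x = y := by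
  have : ∀ i, x i = y i := by intro i; fin_cases i <;> assumption
  exact PiLp.ext this

lemma decomp (v : E2) (hv : ‖v‖ = 1) (z : E2) :
    z = ⟪v, z⟫ • v + ⟪perp v, z⟫ • perp v := by
  have h := norm_sq_formula v
  rw [hv] at h
  apply e2_ext <;>
    simp only [PiLp.add_apply, PiLp.smul_apply, smul_eq_mul, inner_formula,
      perp_apply_zero, perp_apply_one]
  · linear_combination (z 0) * h
  · linear_combination (z 1) * h

def ipMap (w₁ w₂ : E2) : E2 →ₗ[ℝ] E2 where
  toFun y := (WithLp.equiv 2 (Fin 2 → ℝ)).symm ![⟪w₁, y⟫, ⟪w₂, y⟫]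
  map_add' a b := by
    apply e2_ext <;> simp [inner_add_right]
  map_smul' c a := by
    apply e2_ext <;> simp [real_inner_smul_right, inner_formula]

@[simp] lemma ipMap_apply_zero (w₁ w₂ y : E2) : ipMap w₁ w₂ y 0 = ⟪w₁, y⟫ := rfl
@[simp] lemma ipMap_apply_one (w₁ w₂ y : E2) : ipMap w₁ w₂ y 1 = ⟪w₂, y⟫ := rfl

lemma ipMap_det (w₁ w₂ : E2) :
    LinearMap.det (ipMap w₁ w₂) = w₁ 0 * w₂ 1 - w₁ 1 * w₂ 0 := by
  classical
  rw [← LinearMap.det_toMatrix (EuclideanSpace.basisFun (Fin 2) ℝ).toBasis, Matrix.det_fin_two]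
  simp [LinearMap.toMatrix_apply, EuclideanSpace.basisFun_apply,
    EuclideanSpace.inner_single_right, inner_formula, EuclideanSpace.single_apply]

lemma volume_box (a₁ b₁ a₂ b₂ : ℝ) :
    volume {z : E2 | z 0 ∈ Set.Icc a₁ b₁ ∧ z 1 ∈ Set.Icc a₂ b₂}
      = ENNReal.ofReal (b₁ - a₁) * ENNReal.ofReal (b₂ - a₂) := by
  have hmp := EuclideanSpace.volume_preserving_symm_measurableEquiv_toLp (Fin 2)
  have hset : {z : E2 | z 0 ∈ Set.Icc a₁ b₁ ∧ z 1 ∈ Set.Icc a₂ b₂}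
      = (MeasurableEquiv.toLp 2 (Fin 2 → ℝ)).symm ⁻¹'
        (Set.univ.pi fun i => Set.Icc (![a₁, a₂] i) (![b₁, b₂] i)) := by
    ext z
    simp only [Set.mem_preimage, Set.mem_univ_pi, Fin.forall_fin_two]
    simp
  rw [hset, hmp.measure_preimage (MeasurableSet.univ_pi fun i => measurableSet_Icc).nullMeasurableSet,
    volume_pi_pi, Fin.prod_univ_two]
  simp [Real.volume_Icc]

lemma volume_slab {w₁ w₂ : E2} (hd : w₁ 0 * w₂ 1 - w₁ 1 * w₂ 0 ≠ 0) (a₁ b₁ a₂ b₂ : ℝ) :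
    volume {y : E2 | ⟪w₁, y⟫ ∈ Set.Icc a₁ b₁ ∧ ⟪w₂, y⟫ ∈ Set.Icc a₂ b₂}
      = ENNReal.ofReal |(w₁ 0 * w₂ 1 - w₁ 1 * w₂ 0)⁻¹| *
        (ENNReal.ofReal (b₁ - a₁) * ENNReal.ofReal (b₂ - a₂)) := by
  have hdet : LinearMap.det (ipMap w₁ w₂) ≠ 0 := by rw [ipMap_det]; exact hd
  have hset : {y : E2 | ⟪w₁, y⟫ ∈ Set.Icc a₁ b₁ ∧ ⟪w₂, y⟫ ∈ Set.Icc a₂ b₂}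
      = (ipMap w₁ w₂) ⁻¹' {z : E2 | z 0 ∈ Set.Icc a₁ b₁ ∧ z 1 ∈ Set.Icc a₂ b₂} := by
    ext y; simp
  rw [hset, Measure.addHaar_preimage_linearMap volume hdet, volume_box, ipMap_det]

lemma perp_norm {v : E2} (hv : ‖v‖ = 1) : ‖perp v‖ = 1 := by
  have h := norm_sq_formula v
  have h2 := norm_sq_formula (perp v)
  rw [hv] at h
  simp only [perp_apply_zero, perp_apply_one] at h2
  nlinarith [norm_nonneg (perp v)]

lemma perp_det {v : E2} (hv : ‖v‖ = 1) : v 0 * perp v 1 - v 1 * perp v 0 = 1 := by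
  have h := norm_sq_formula v
  rw [hv] at h
  simp only [perp_apply_zero, perp_apply_one]
  nlinarith

lemma inner_perp_self (v : E2) : ⟪perp v, v⟫ = 0 := by
  simp [inner_formula]; ring

/-- The rectangle (in rotated coordinates) centered at `x` with half-sides `r₁` (along `v`)
and `r₂` (along `perp v`). -/
def slab (x v : E2) (r₁ r₂ : ℝ) : Set E2 :=
  {y | ⟪v, y - x⟫ ∈ Set.Icc (-r₁) r₁ ∧ ⟪perp v, y - x⟫ ∈ Set.Icc (-r₂) r₂}

lemma slab_eq (x v : E2) (r₁ r₂ : ℝ) :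
    slab x v r₁ r₂ = {y : E2 | ⟪v, y⟫ ∈ Set.Icc (⟪v, x⟫ - r₁) (⟪v, x⟫ + r₁) ∧
      ⟪perp v, y⟫ ∈ Set.Icc (⟪perp v, x⟫ - r₂) (⟪perp v, x⟫ + r₂)} := by
  ext y
  simp only [slab, Set.mem_setOf_eq, Set.mem_Icc, inner_sub_right]
  constructor <;> rintro ⟨⟨h1, h2⟩, h3, h4⟩ <;> exact ⟨⟨by linarith, by linarith⟩, by linarith, by linarith⟩

lemma volume_slab' {v : E2} (hv : ‖v‖ = 1) (x : E2) (r₁ r₂ : ℝ) :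
    volume (slab x v r₁ r₂) = ENNReal.ofReal (2 * r₁) * ENNReal.ofReal (2 * r₂) := by
  have hd : v 0 * perp v 1 - v 1 * perp v 0 ≠ 0 := by rw [perp_det hv]; norm_num
  rw [slab_eq, volume_slab hd]
  rw [perp_det hv]
  rw [inv_one, abs_one, ENNReal.ofReal_one, one_mul]
  congr 2 <;> ring

lemma convex_slab (x v : E2) (r₁ r₂ : ℝ) : Convex ℝ (slab x v r₁ r₂) := by
  rintro y hy z hz a b ha hb hab
  simp only [slab, Set.mem_setOf_eq, Set.mem_Icc] at *
  have e1 : ⟪v, a • y + b • z - x⟫ = a * ⟪v, y - x⟫ + b * ⟪v, z - x⟫ := by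
    simp only [inner_sub_right, real_inner_smul_right, inner_add_right]
    linear_combination (⟪v, x⟫ : ℝ) * hab
  have e2 : ⟪perp v, a • y + b • z - x⟫ = a * ⟪perp v, y - x⟫ + b * ⟪perp v, z - x⟫ := by
    simp only [inner_sub_right, real_inner_smul_right, inner_add_right]
    linear_combination (⟪perp v, x⟫ : ℝ) * hab
  rw [e1, e2]
  obtain ⟨⟨h1, h2⟩, h3, h4⟩ := hy
  obtain ⟨⟨h5, h6⟩, h7, h8⟩ := hz
  exact ⟨⟨by nlinarith, by nlinarith⟩, by nlinarith, by nlinarith⟩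

lemma bounded_slab {v : E2} (hv : ‖v‖ = 1) (x : E2) (r₁ r₂ : ℝ) :
    IsBounded (slab x v r₁ r₂) := by
  apply (isBounded_closedBall (x := x) (r := r₁ + r₂)).subset
  rintro y ⟨h1, h2⟩
  simp only [Set.mem_Icc] at h1 h2
  have hdec := decomp v hv (y - x)
  have : dist y x = ‖y - x‖ := dist_eq_norm y x
  rw [mem_closedBall, this, hdec]
  calc ‖⟪v, y-x⟫ • v + ⟪perp v, y-x⟫ • perp v‖
      ≤ ‖⟪v, y-x⟫ • v‖ + ‖⟪perp v, y-x⟫ • perp v‖ := norm_add_le _ _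
    _ = |⟪v, y-x⟫| * ‖v‖ + |⟪perp v, y-x⟫| * ‖perp v‖ := by rw [norm_smul, norm_smul]; rfl
    _ ≤ r₁ + r₂ := by
        rw [hv, perp_norm hv, mul_one, mul_one]
        exact add_le_add (abs_le.mpr ⟨h1.1, h1.2⟩) (abs_le.mpr ⟨h2.1, h2.2⟩)

def tubeSet (x v : E2) (δ : ℝ) : Set E2 := {y | ∃ t ∈ Set.Icc (0:ℝ) 1, dist y (x + t • v) ≤ δ}

lemma inner_self_one {v : E2} (hv : ‖v‖ = 1) : ⟪v, v⟫ = (1:ℝ) := by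
  rw [real_inner_self_eq_norm_mul_norm, hv]; norm_num

lemma tube_subset_slab {v : E2} (hv : ‖v‖ = 1) (x : E2) {δ : ℝ} (hδ : 0 ≤ δ) :
    tubeSet x v δ ⊆ slab (x + (1/2:ℝ) • v) v (1/2 + δ) δ := by
  rintro y ⟨t, ht, hdist⟩
  have key : y - (x + (1/2:ℝ) • v) = (y - (x + t • v)) + (t - 1/2) • v := by module
  have hn : ‖y - (x + t • v)‖ ≤ δ := by rwa [← dist_eq_norm]
  have hvi : |⟪v, y - (x + t • v)⟫| ≤ δ := by
    calc |⟪v, y - (x + t • v)⟫| ≤ ‖v‖ * ‖y - (x + t • v)‖ := abs_real_inner_le_norm _ _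
      _ ≤ δ := by rw [hv, one_mul]; exact hn
  have hwi : |⟪perp v, y - (x + t • v)⟫| ≤ δ := by
    calc |⟪perp v, y - (x + t • v)⟫| ≤ ‖perp v‖ * ‖y - (x + t • v)‖ := abs_real_inner_le_norm _ _
      _ ≤ δ := by rw [perp_norm hv, one_mul]; exact hn
  constructor
  · rw [Set.mem_Icc, key, inner_add_right, real_inner_smul_right, inner_self_one hv]
    obtain ⟨h1, h2⟩ := abs_le.mp hvi
    obtain ⟨h3, h4⟩ := ht
    constructor <;> nlinarith
  · rw [Set.mem_Icc, key, inner_add_right, real_inner_smul_right, inner_perp_self]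
    obtain ⟨h1, h2⟩ := abs_le.mp hwi
    constructor <;> nlinarith

lemma slab_subset_tube {v : E2} (hv : ‖v‖ = 1) (x : E2) {δ : ℝ} (hδ : 0 ≤ δ) :
    slab (x + (1/2:ℝ) • v) v (1/2) δ ⊆ tubeSet x v δ := by
  rintro y ⟨h1, h2⟩
  rw [Set.mem_Icc] at h1 h2
  set c := x + (1/2:ℝ) • v with hc
  set s := ⟪v, y - c⟫ with hs
  refine ⟨s + 1/2, ⟨by linarith [h1.1], by linarith [h1.2]⟩, ?_⟩
  have hdec := decomp v hv (y - c)
  have key : y - (x + (s + 1/2) • v) = (y - c) - s • v := by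
    rw [hc]; module
  rw [dist_eq_norm, key, hdec]
  have : ⟪v, y - c⟫ • v + ⟪perp v, y - c⟫ • perp v - s • v = ⟪perp v, y - c⟫ • perp v := by
    rw [← hs]; module
  rw [this, norm_smul, perp_norm hv, mul_one]
  exact abs_le.mpr h2

lemma tube_eq_image (x v : E2) (δ : ℝ) :
    tubeSet x v δ = (fun p : ℝ × E2 => x + p.1 • v + p.2) ''
      (Set.Icc (0:ℝ) 1 ×ˢ closedBall (0:E2) δ) := by
  ext y
  constructor
  · rintro ⟨t, ht, hdist⟩
    refine ⟨(t, y - (x + t • v)), ⟨ht, by simpa [mem_closedBall, dist_eq_norm] using hdist⟩, by module⟩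
  · rintro ⟨⟨t, z⟩, ⟨ht, hz⟩, rfl⟩
    refine ⟨t, ht, ?_⟩
    simp only [mem_closedBall, dist_zero_right] at hz
    rw [dist_eq_norm]
    simpa using hz

lemma tube_compact (x v : E2) {δ : ℝ} (hδ : 0 ≤ δ) : IsCompact (tubeSet x v δ) := by
  rw [tube_eq_image]
  exact (isCompact_Icc.prod (isCompact_closedBall _ _)).image (by fun_prop)

lemma tube_measurableSet (x v : E2) {δ : ℝ} (hδ : 0 ≤ δ) : MeasurableSet (tubeSet x v δ) :=
  (tube_compact x v hδ).isClosed.measurableSet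

lemma tube_volume_le {v : E2} (hv : ‖v‖ = 1) (x : E2) {δ : ℝ} (hδ : 0 ≤ δ) :
    volume (tubeSet x v δ) ≤ ENNReal.ofReal (1 + 2*δ) * ENNReal.ofReal (2*δ) := by
  calc volume (tubeSet x v δ) ≤ volume (slab (x + (1/2:ℝ) • v) v (1/2 + δ) δ) :=
        measure_mono (tube_subset_slab hv x hδ)
    _ = ENNReal.ofReal (2 * (1/2 + δ)) * ENNReal.ofReal (2*δ) := volume_slab' hv _ _ _
    _ = ENNReal.ofReal (1 + 2*δ) * ENNReal.ofReal (2*δ) := by ring_nf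

lemma tube_volume_ge {v : E2} (hv : ‖v‖ = 1) (x : E2) {δ : ℝ} (hδ : 0 ≤ δ) :
    ENNReal.ofReal (2*δ) ≤ volume (tubeSet x v δ) := by
  calc ENNReal.ofReal (2*δ) = ENNReal.ofReal (2 * (1/2:ℝ)) * ENNReal.ofReal (2*δ) := by
        norm_num
    _ = volume (slab (x + (1/2:ℝ) • v) v (1/2) δ) := (volume_slab' hv _ _ _).symm
    _ ≤ volume (tubeSet x v δ) := measure_mono (slab_subset_tube hv x hδ)

lemma tube_subset_strip {v : E2} (hv : ‖v‖ = 1) (x : E2) {δ : ℝ} (hδ : 0 ≤ δ) :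
    tubeSet x v δ ⊆ {y : E2 | ⟪perp v, y⟫ ∈ Set.Icc (⟪perp v, x⟫ - δ) (⟪perp v, x⟫ + δ)} := by
  rintro y ⟨t, ht, hdist⟩
  have key : y - x = (y - (x + t • v)) + t • v := by module
  have hn : ‖y - (x + t • v)‖ ≤ δ := by rwa [← dist_eq_norm]
  have hwi : |⟪perp v, y - (x + t • v)⟫| ≤ δ := by
    calc |⟪perp v, y - (x + t • v)⟫| ≤ ‖perp v‖ * ‖y - (x + t • v)‖ := abs_real_inner_le_norm _ _
      _ ≤ δ := by rw [perp_norm hv, one_mul]; exact hn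
  have he : ⟪perp v, y⟫ - ⟪perp v, x⟫ = ⟪perp v, y - (x + t • v)⟫ := by
    rw [← inner_sub_right, key, inner_add_right, real_inner_smul_right, inner_perp_self]
    ring
  obtain ⟨h1, h2⟩ := abs_le.mp hwi
  exact ⟨by linarith, by linarith⟩

lemma tube_inter_volume {v v' : E2} (hv : ‖v‖ = 1) (hv' : ‖v'‖ = 1) (x x' : E2)
    {δ : ℝ} (hδ : 0 ≤ δ) (hs : ⟪perp v, v'⟫ ≠ 0) :
    volume (tubeSet x v δ ∩ tubeSet x' v' δ)
      ≤ ENNReal.ofReal |⟪perp v, v'⟫|⁻¹ * (ENNReal.ofReal (2*δ) * ENNReal.ofReal (2*δ)) := by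
  have hd : perp v 0 * perp v' 1 - perp v 1 * perp v' 0 ≠ 0 := by
    have : perp v 0 * perp v' 1 - perp v 1 * perp v' 0 = ⟪perp v, v'⟫ := by
      simp [inner_formula]
    rw [this]; exact hs
  have hsub : tubeSet x v δ ∩ tubeSet x' v' δ ⊆
      {y : E2 | ⟪perp v, y⟫ ∈ Set.Icc (⟪perp v, x⟫ - δ) (⟪perp v, x⟫ + δ) ∧
        ⟪perp v', y⟫ ∈ Set.Icc (⟪perp v', x'⟫ - δ) (⟪perp v', x'⟫ + δ)} := by
    rintro y ⟨hy, hy'⟩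
    exact ⟨tube_subset_strip hv x hδ hy, tube_subset_strip hv' x' hδ hy'⟩
  calc volume (tubeSet x v δ ∩ tubeSet x' v' δ) ≤ _ := measure_mono hsub
    _ = ENNReal.ofReal |(perp v 0 * perp v' 1 - perp v 1 * perp v' 0)⁻¹| *
        (ENNReal.ofReal (⟪perp v, x⟫ + δ - (⟪perp v, x⟫ - δ)) *
         ENNReal.ofReal (⟪perp v', x'⟫ + δ - (⟪perp v', x'⟫ - δ))) := volume_slab hd _ _ _ _
    _ = ENNReal.ofReal |⟪perp v, v'⟫|⁻¹ * (ENNReal.ofReal (2*δ) * ENNReal.ofReal (2*δ)) := by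
        rw [abs_inv]
        congr 3
        · congr 1
          simp [inner_formula]
        · ring
        · ring

lemma tubes_in_slab {v v' : E2} (hv : ‖v‖ = 1) (hv' : ‖v'‖ = 1) (x x' : E2)
    {δ σ : ℝ} (hδ : 0 ≤ δ) (hδ1 : δ ≤ 1) (hσ : |⟪perp v, v'⟫| ≤ σ)
    (hmeet : (tubeSet x v δ ∩ tubeSet x' v' δ).Nonempty) :
    tubeSet x' v' δ ⊆ slab x v 5 (σ + 3*δ) := by
  obtain ⟨z, hz, hz'⟩ := hmeet
  obtain ⟨u, hu, hud⟩ := hz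
  obtain ⟨s', hs', hsd⟩ := hz'
  intro y hy
  obtain ⟨t', ht', htd⟩ := hy
  set w := perp v with hw
  have key : y - x = (t' - s') • v' + (y - (x' + t' • v')) - (z - (x' + s' • v'))
      + u • v + (z - (x + u • v)) := by module
  have na : ‖y - (x' + t' • v')‖ ≤ δ := by rwa [← dist_eq_norm]
  have nb : ‖z - (x' + s' • v')‖ ≤ δ := by rwa [← dist_eq_norm]
  have ne' : ‖z - (x + u • v)‖ ≤ δ := by rwa [← dist_eq_norm]
  have hts : |t' - s'| ≤ 1 := by
    rw [abs_le]; rw [Set.mem_Icc] at ht' hs'; constructor <;> linarith [ht'.1, ht'.2, hs'.1, hs'.2]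
  -- second coordinate
  have ha : |⟪w, y - (x' + t' • v')⟫| ≤ δ :=
    le_trans (abs_real_inner_le_norm _ _) (by rw [perp_norm hv, one_mul]; exact na)
  have hb : |⟪w, z - (x' + s' • v')⟫| ≤ δ :=
    le_trans (abs_real_inner_le_norm _ _) (by rw [perp_norm hv, one_mul]; exact nb)
  have he : |⟪w, z - (x + u • v)⟫| ≤ δ :=
    le_trans (abs_real_inner_le_norm _ _) (by rw [perp_norm hv, one_mul]; exact ne')
  have hprod : |(t' - s') * ⟪w, v'⟫| ≤ σ := by
    rw [abs_mul]
    have h0 : (0:ℝ) ≤ |⟪w, v'⟫| := abs_nonneg _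
    nlinarith
  have hinner2 : ⟪w, y - x⟫ = (t' - s') * ⟪w, v'⟫ + ⟪w, y - (x' + t' • v')⟫
      - ⟪w, z - (x' + s' • v')⟫ + ⟪w, z - (x + u • v)⟫ := by
    rw [key]
    simp only [inner_add_right, inner_sub_right, real_inner_smul_right, hw, inner_perp_self]
    ring
  -- first coordinate
  have hny : ‖y - x‖ ≤ 5 := by
    rw [key]
    have h1 : ‖(t' - s') • v'‖ ≤ 1 := by rw [norm_smul, hv', mul_one, Real.norm_eq_abs]; exact hts
    have h2 : ‖u • v‖ ≤ 1 := by
      rw [norm_smul, hv, mul_one, Real.norm_eq_abs, abs_le]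
      exact ⟨by linarith [hu.1], hu.2⟩
    calc ‖(t' - s') • v' + (y - (x' + t' • v')) - (z - (x' + s' • v')) + u • v + (z - (x + u • v))‖
        ≤ ‖(t' - s') • v' + (y - (x' + t' • v')) - (z - (x' + s' • v')) + u • v‖
          + ‖z - (x + u • v)‖ := norm_add_le _ _
      _ ≤ (‖(t' - s') • v' + (y - (x' + t' • v')) - (z - (x' + s' • v'))‖ + ‖u • v‖)
          + ‖z - (x + u • v)‖ := by gcongr; exact norm_add_le _ _
      _ ≤ ((‖(t' - s') • v' + (y - (x' + t' • v'))‖ + ‖z - (x' + s' • v')‖) + ‖u • v‖)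
          + ‖z - (x + u • v)‖ := by gcongr; exact norm_sub_le _ _
      _ ≤ (((‖(t' - s') • v'‖ + ‖y - (x' + t' • v')‖) + ‖z - (x' + s' • v')‖) + ‖u • v‖)
          + ‖z - (x + u • v)‖ := by gcongr; exact norm_add_le _ _
      _ ≤ 5 := by linarith
  have hv1 : |⟪v, y - x⟫| ≤ 5 :=
    le_trans (abs_real_inner_le_norm _ _) (by rw [hv, one_mul]; exact hny)
  constructor
  · rw [Set.mem_Icc]; exact abs_le.mp hv1
  · rw [Set.mem_Icc]
    have hab := abs_le.mp ha
    have hbb := abs_le.mp hb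
    have heb := abs_le.mp he
    have hpb := abs_le.mp hprod
    rw [hinner2]
    constructor <;> [linarith [hpb.1, hab.1, hbb.2, heb.1]; linarith [hpb.2, hab.2, hbb.1, heb.2]]

lemma tube_volume_lt_top {v : E2} (hv : ‖v‖ = 1) (x : E2) {δ : ℝ} (hδ : 0 ≤ δ) :
    volume (tubeSet x v δ) < ⊤ :=
  lt_of_le_of_lt (tube_volume_le hv x hδ) (by finiteness)

open scoped Classical in
lemma overlap_sum_bound {δ : ℝ} (hδ0 : 0 < δ) (hδ1 : δ < 1)
    (𝕋 : Finset (Set E2)) (x v : Set E2 → E2)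
    (hv : ∀ T ∈ 𝕋, ‖v T‖ = 1) (heq : ∀ T ∈ 𝕋, T = tubeSet (x T) (v T) δ)
    (hdens : ∀ K : Set E2, Convex ℝ K → IsBounded K → 0 < volume K → density 𝕋 K ≤ 1)
    {T : Set E2} (hT : T ∈ 𝕋) :
    ∑ T' ∈ 𝕋, (volume (T ∩ T')).toReal
      ≤ 320 * ((⌊Real.logb 2 δ⁻¹⌋₊ + 1 : ℕ) + 1) * δ := by
  set K : ℕ := ⌊Real.logb 2 δ⁻¹⌋₊ + 1 with hKdef
  have hδinv : (0:ℝ) < δ⁻¹ := by positivity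
  have h2K : δ⁻¹ ≤ (2:ℝ)^K := by
    have h1 : Real.logb 2 δ⁻¹ < (K : ℝ) := by
      rw [hKdef]; push_cast; exact Nat.lt_floor_add_one _
    have h2 : δ⁻¹ = (2:ℝ) ^ (Real.logb 2 δ⁻¹) := (Real.rpow_logb (by norm_num) (by norm_num) hδinv).symm
    rw [h2, ← Real.rpow_natCast 2 K]
    exact Real.rpow_le_rpow_of_exponent_le (by norm_num) h1.le
  have hδ2K : 1 ≤ δ * 2^K := by
    rw [← mul_inv_cancel₀ (ne_of_gt hδ0)]
    exact mul_le_mul_of_nonneg_left h2K hδ0.le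
  -- the angle function and the dyadic bucket
  set s : Set E2 → ℝ := fun T' => |⟪perp (v T), v T'⟫| with hsdef
  have hex : ∀ T' : Set E2, ∃ k : ℕ, s T' ≤ δ * 2^k := by
    intro T'
    obtain ⟨k, hk⟩ := pow_unbounded_of_one_lt (s T' / δ) (by norm_num : (1:ℝ) < 2)
    exact ⟨k, by rw [← div_le_iff₀' hδ0]; exact hk.le⟩
  set g : Set E2 → ℕ := fun T' => Nat.find (hex T') with hgdef
  have hgle : ∀ T' ∈ 𝕋, g T' ∈ Finset.range (K + 1) := by
    intro T' hT'
    rw [Finset.mem_range, Nat.lt_add_one_iff]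
    apply Nat.find_le
    calc s T' ≤ 1 := by
          rw [hsdef]
          calc |⟪perp (v T), v T'⟫| ≤ ‖perp (v T)‖ * ‖v T'‖ := abs_real_inner_le_norm _ _
            _ = 1 := by rw [perp_norm (hv T hT), hv T' hT', mul_one]
      _ ≤ δ * 2^K := hδ2K
  have hfin : ∀ T' ∈ 𝕋, volume T' ≠ ⊤ := by
    intro T' hT'
    rw [heq T' hT']
    exact (tube_volume_lt_top (hv T' hT') _ hδ0.le).ne
  have hlow : ∀ T' ∈ 𝕋, 2*δ ≤ (volume T').toReal := by
    intro T' hT'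
    have := tube_volume_ge (hv T' hT') (x T') hδ0.le
    calc 2*δ = (ENNReal.ofReal (2*δ)).toReal := by
          rw [ENNReal.toReal_ofReal (by positivity)]
      _ ≤ (volume T').toReal := by
          apply ENNReal.toReal_mono (hfin T' hT')
          rw [heq T' hT']; exact this
  rw [← Finset.sum_fiberwise_of_maps_to hgle (fun T' => (volume (T ∩ T')).toReal)]
  have hbucket : ∀ k ∈ Finset.range (K + 1),
      ∑ T' ∈ 𝕋.filter (fun T' => g T' = k), (volume (T ∩ T')).toReal ≤ 320 * δ := by
    intro k _
    set B := 𝕋.filter (fun T' => g T' = k) with hBdef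
    set M := B.filter (fun T' => (T ∩ T').Nonempty) with hMdef
    have hsum_eq : ∑ T' ∈ B, (volume (T ∩ T')).toReal = ∑ T' ∈ M, (volume (T ∩ T')).toReal := by
      rw [hMdef]
      refine (Finset.sum_filter_of_ne ?_).symm
      intro T' _ hne
      by_contra hempty
      rw [Set.not_nonempty_iff_eq_empty] at hempty
      rw [hempty] at hne
      simp at hne
    rw [hsum_eq]
    -- the containing slab
    set Ks := slab (x T) (v T) 5 (δ * 2^k + 3*δ) with hKs
    have hTmem : ∀ T' ∈ M, T' ∈ 𝕋 := by
      intro T' hT'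
      rw [hMdef] at hT'
      exact Finset.mem_of_mem_filter _ (Finset.mem_of_mem_filter T' hT')
    have hsub : ∀ T' ∈ M, T' ⊆ Ks := by
      intro T' hT'
      have hT'𝕋 : T' ∈ 𝕋 := hTmem T' hT'
      have hgk : g T' = k := by
        rw [hMdef] at hT'
        exact (Finset.mem_filter.mp (Finset.mem_of_mem_filter T' hT')).2
      have hmeet : (T ∩ T').Nonempty := (Finset.mem_filter.mp hT').2
      have hσ : s T' ≤ δ * 2^k := by rw [← hgk]; exact Nat.find_spec (hex T')
      rw [heq T' hT'𝕋]
      rw [heq T hT, heq T' hT'𝕋] at hmeet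
      exact tubes_in_slab (hv T hT) (hv T' hT'𝕋) _ _ hδ0.le hδ1.le hσ hmeet
    -- per-term bound
    have hterm : ∀ T' ∈ M, (volume (T ∩ T')).toReal ≤ (4 / 2^k) * (volume T').toReal := by
      intro T' hT'
      have hT'𝕋 : T' ∈ 𝕋 := hTmem T' hT'
      have hfinTT' : volume (T ∩ T') ≠ ⊤ :=
        (lt_of_le_of_lt (measure_mono Set.inter_subset_right) (lt_top_iff_ne_top.mpr (hfin T' hT'𝕋))).ne
      have hgk : g T' = k := by
        rw [hMdef] at hT'
        exact (Finset.mem_filter.mp (Finset.mem_of_mem_filter T' hT')).2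
      rcases Nat.eq_zero_or_pos k with hk0 | hkpos
      · subst hk0
        have h1 : (volume (T ∩ T')).toReal ≤ (volume T').toReal :=
          ENNReal.toReal_mono (hfin T' hT'𝕋) (measure_mono Set.inter_subset_right)
        have h2 : (0:ℝ) ≤ (volume T').toReal := ENNReal.toReal_nonneg
        calc (volume (T ∩ T')).toReal ≤ (volume T').toReal := h1
          _ ≤ (4 / 2^0) * (volume T').toReal := by norm_num; linarith
      · -- k ≥ 1 : angle is large
        have hklt : k - 1 < g T' := by omega
        have hnot := Nat.find_min (hex T') hklt
        push_neg at hnot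
        have hslarge : δ * 2^(k-1) < s T' := hnot
        have hspos : 0 < s T' := lt_of_lt_of_le (by positivity) hslarge.le
        have hsne : ⟪perp (v T), v T'⟫ ≠ 0 := by
          intro h
          rw [hsdef] at hspos
          simp only [h, abs_zero] at hspos
          exact lt_irrefl 0 hspos
        have hvol := tube_inter_volume (hv T hT) (hv T' hT'𝕋) (x T) (x T') hδ0.le hsne
        rw [← heq T hT, ← heq T' hT'𝕋] at hvol
        have htr : (volume (T ∩ T')).toReal ≤ (s T')⁻¹ * (2*δ * (2*δ)) := by
          have hhh := ENNReal.toReal_mono (by finiteness) hvol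
          rw [ENNReal.toReal_mul, ENNReal.toReal_mul, ENNReal.toReal_ofReal (by positivity),
            ENNReal.toReal_ofReal (by positivity)] at hhh
          simpa only [hsdef] using hhh
        have hsinv : (s T')⁻¹ ≤ (δ * 2^(k-1))⁻¹ := by
          apply inv_anti₀ (by positivity) hslarge.le
        have h2k : (2:ℝ)^(k-1) * 2 = 2^k := by
          rw [← pow_succ]
          congr 1
          omega
        calc (volume (T ∩ T')).toReal ≤ (s T')⁻¹ * (2*δ * (2*δ)) := htr
          _ ≤ (δ * 2^(k-1))⁻¹ * (2*δ * (2*δ)) := by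
              apply mul_le_mul_of_nonneg_right hsinv (by positivity)
          _ = (4 / 2^k) * (2*δ) := by
              rw [← h2k]
              field_simp
              ring
          _ ≤ (4 / 2^k) * (volume T').toReal := by
              apply mul_le_mul_of_nonneg_left (hlow T' hT'𝕋) (by positivity)
    -- density bound on the slab
    have hKsvol : volume Ks = ENNReal.ofReal (2*5) * ENNReal.ofReal (2*(δ * 2^k + 3*δ)) :=
      volume_slab' (hv T hT) _ _ _
    have hKsvol_toReal : (volume Ks).toReal = 10 * (2*(δ * 2^k + 3*δ)) := by
      rw [hKsvol, ENNReal.toReal_mul, ENNReal.toReal_ofReal (by norm_num),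
        ENNReal.toReal_ofReal (by positivity)]
      norm_num
    have hKspos : 0 < volume Ks := by
      rw [hKsvol]
      apply ENNReal.mul_pos <;> simp [ENNReal.ofReal_pos] <;> positivity
    have hdens_Ks := hdens Ks (convex_slab _ _ _ _) (bounded_slab (hv T hT) _ _ _) hKspos
    rw [density, div_le_one (by rw [hKsvol_toReal]; positivity)] at hdens_Ks
    have hsumM : ∑ T' ∈ M, (volume T').toReal ≤ (volume Ks).toReal := by
      calc ∑ T' ∈ M, (volume T').toReal
          = ∑ T' ∈ M, Set.indicator {S : Set E2 | S ⊆ Ks}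
              (fun S => (volume S).toReal) T' := by
            apply Finset.sum_congr rfl
            intro T' hT'
            exact (Set.indicator_of_mem (show T' ∈ {S : Set E2 | S ⊆ Ks} from hsub T' hT')
              (fun S => (volume S).toReal)).symm
        _ ≤ ∑ T' ∈ 𝕋, Set.indicator {S : Set E2 | S ⊆ Ks}
              (fun S => (volume S).toReal) T' := by
            apply Finset.sum_le_sum_of_subset_of_nonneg
            · intro T' hT'
              exact hTmem T' hT'
            · intro T' _ _
              exact Set.indicator_nonneg (fun _ _ => ENNReal.toReal_nonneg) _
        _ ≤ (volume Ks).toReal := hdens_Ks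
    calc ∑ T' ∈ M, (volume (T ∩ T')).toReal
        ≤ ∑ T' ∈ M, (4 / 2^k) * (volume T').toReal := Finset.sum_le_sum hterm
      _ = (4 / 2^k) * ∑ T' ∈ M, (volume T').toReal := by rw [Finset.mul_sum]
      _ ≤ (4 / 2^k) * (volume Ks).toReal := by
          apply mul_le_mul_of_nonneg_left hsumM (by positivity)
      _ = (4 / 2^k) * (10 * (2*(δ * 2^k + 3*δ))) := by rw [hKsvol_toReal]
      _ = 80 * δ + 240 * δ / 2^k := by field_simp; ring
      _ ≤ 320 * δ := by
          have h1 : (1:ℝ) ≤ 2^k := one_le_pow₀ (by norm_num)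
          have h2 : 240 * δ / 2^k ≤ 240 * δ := by
            apply div_le_self (by positivity) h1
          linarith
  calc ∑ k ∈ Finset.range (K+1), ∑ T' ∈ 𝕋.filter (fun T' => g T' = k), (volume (T ∩ T')).toReal
      ≤ ∑ k ∈ Finset.range (K+1), 320 * δ := Finset.sum_le_sum hbucket
    _ = ((K+1 : ℕ) : ℝ) * (320 * δ) := by rw [Finset.sum_const, Finset.card_range, nsmul_eq_mul]
    _ = 320 * ((⌊Real.logb 2 δ⁻¹⌋₊ + 1 : ℕ) + 1) * δ := by rw [hKdef]; push_cast; ring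

lemma cauchy_schwarz_step (𝕋 : Finset (Set E2)) (hmeas : ∀ T ∈ 𝕋, MeasurableSet T) :
    (∑ T ∈ 𝕋, volume T)^2 ≤ volume (⋃ T ∈ 𝕋, T) * ∑ T ∈ 𝕋, ∑ T' ∈ 𝕋, volume (T ∩ T') := by
  set U := ⋃ T ∈ 𝕋, T with hUdef
  have hU : MeasurableSet U := by
    apply MeasurableSet.biUnion 𝕋.countable_toSet
    intro T hT
    exact hmeas T hT
  set f : E2 → ℝ≥0∞ := fun y => ∑ T ∈ 𝕋, T.indicator (1 : E2 → ℝ≥0∞) y with hfdef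
  have hmeas_ind : ∀ T ∈ 𝕋, Measurable (T.indicator (1 : E2 → ℝ≥0∞)) :=
    fun T hT => measurable_one.indicator (hmeas T hT)
  have hfm : Measurable f := by
    apply Finset.measurable_sum
    intro T hT
    exact hmeas_ind T hT
  have h1 : ∫⁻ y, f y = ∑ T ∈ 𝕋, volume T := by
    rw [hfdef]
    rw [lintegral_finset_sum _ hmeas_ind]
    exact Finset.sum_congr rfl fun T hT => lintegral_indicator_one (hmeas T hT)
  have h2 : ∫⁻ y, f y * f y = ∑ T ∈ 𝕋, ∑ T' ∈ 𝕋, volume (T ∩ T') := by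
    have hpt : ∀ y, f y * f y
        = ∑ T ∈ 𝕋, ∑ T' ∈ 𝕋, (T ∩ T').indicator (1 : E2 → ℝ≥0∞) y := by
      intro y
      rw [hfdef]
      rw [Finset.sum_mul_sum]
      apply Finset.sum_congr rfl
      intro T _
      apply Finset.sum_congr rfl
      intro T' _
      rw [Set.inter_indicator_one]
      rfl
    calc ∫⁻ y, f y * f y
        = ∫⁻ y, ∑ T ∈ 𝕋, ∑ T' ∈ 𝕋, (T ∩ T').indicator (1 : E2 → ℝ≥0∞) y := by
          congr 1; funext y; exact hpt y
      _ = ∑ T ∈ 𝕋, ∑ T' ∈ 𝕋, volume (T ∩ T') := by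
          rw [lintegral_finset_sum _ (fun T hT => Finset.measurable_sum _
            (fun T' hT' => measurable_one.indicator ((hmeas T hT).inter (hmeas T' hT'))))]
          apply Finset.sum_congr rfl
          intro T hT
          rw [lintegral_finset_sum _ (fun T' hT' =>
            measurable_one.indicator ((hmeas T hT).inter (hmeas T' hT')))]
          exact Finset.sum_congr rfl fun T' hT' =>
            lintegral_indicator_one ((hmeas T hT).inter (hmeas T' hT'))
  -- f = 1_U * f pointwise
  have hprod : ∀ y, (U.indicator (1 : E2 → ℝ≥0∞) * f) y = f y := by
    intro y
    by_cases hy : y ∈ U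
    · simp [Set.indicator_of_mem hy]
    · have hz : f y = 0 := by
        rw [hfdef]
        apply Finset.sum_eq_zero
        intro T hT
        apply Set.indicator_of_notMem
        intro hyT
        exact hy (Set.mem_biUnion hT hyT)
      simp [hz]
  have hconj : Real.HolderConjugate 2 2 := Real.HolderConjugate.two_two
  have hCS := ENNReal.lintegral_mul_le_Lp_mul_Lq volume hconj
    (measurable_one.indicator hU).aemeasurable hfm.aemeasurable
  rw [lintegral_congr hprod] at hCS
  have hg2 : ∫⁻ y, (U.indicator (1 : E2 → ℝ≥0∞) y) ^ (2:ℝ) = volume U := by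
    have : ∀ y, (U.indicator (1 : E2 → ℝ≥0∞) y) ^ (2:ℝ) = U.indicator (1 : E2 → ℝ≥0∞) y := by
      intro y
      by_cases hy : y ∈ U
      · simp [Set.indicator_of_mem hy]
      · simp [Set.indicator_of_notMem hy, ENNReal.zero_rpow_of_pos (by norm_num : (0:ℝ) < 2)]
    rw [lintegral_congr this, lintegral_indicator_one hU]
  have hf2 : ∫⁻ y, (f y) ^ (2:ℝ) = ∑ T ∈ 𝕋, ∑ T' ∈ 𝕋, volume (T ∩ T') := by
    rw [← h2]
    apply lintegral_congr
    intro y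
    rw [ENNReal.rpow_two, pow_two]
  rw [h1, hg2, hf2] at hCS
  -- now square both sides
  set S := ∑ T ∈ 𝕋, volume T with hS
  set P := ∑ T ∈ 𝕋, ∑ T' ∈ 𝕋, volume (T ∩ T') with hP
  have hmul : volume U ^ (1/(2:ℝ)) * P ^ (1/(2:ℝ)) = (volume U * P) ^ (1/(2:ℝ)) :=
    (ENNReal.mul_rpow_of_nonneg _ _ (by norm_num)).symm
  rw [hmul] at hCS
  calc S^2 ≤ ((volume U * P) ^ (1/(2:ℝ)))^2 := by
        apply pow_le_pow_left' hCS
    _ = volume U * P := by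
        rw [← ENNReal.rpow_two, ← ENNReal.rpow_mul]
        norm_num

/-- The 2-dimensional Kakeya estimate with convex Wolff axioms. -/
theorem kakeya_two_dimensional :
    ∀ ε > (0 : ℝ), ∃ C > (0 : ℝ), ∀ δ ∈ Set.Ioo (0 : ℝ) 1,
      ∀ 𝕋 : Finset (Set (EuclideanSpace ℝ (Fin 2))), 𝕋.Nonempty →
        (∀ T ∈ 𝕋, IsTube δ T) →
        (∀ K : Set (EuclideanSpace ℝ (Fin 2)), Convex ℝ K → IsBounded K →
          0 < volume K → density 𝕋 K ≤ 1) →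
        mult 𝕋 ≤ C * δ ^ (-ε) := by
  intro ε hε
  refine ⟨320 / ε + 320, by positivity, ?_⟩
  rintro δ ⟨hδ0, hδ1⟩ 𝕋 h𝕋ne hTube hdens
  have hTube' : ∀ T ∈ 𝕋, ∃ x v : E2, ‖v‖ = 1 ∧ T = tubeSet x v δ := fun T hT => hTube T hT
  choose! x v hv heq using hTube'
  have hmeas : ∀ T ∈ 𝕋, MeasurableSet T := fun T hT => by
    rw [heq T hT]; exact tube_measurableSet _ _ hδ0.le
  have hfin : ∀ T ∈ 𝕋, volume T ≠ ⊤ := fun T hT => by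
    rw [heq T hT]; exact (tube_volume_lt_top (hv T hT) _ hδ0.le).ne
  have hlowE : ∀ T ∈ 𝕋, ENNReal.ofReal (2*δ) ≤ volume T := fun T hT => by
    rw [heq T hT]; exact tube_volume_ge (hv T hT) _ hδ0.le
  set U := ⋃ T ∈ 𝕋, T with hUdef
  set S := ∑ T ∈ 𝕋, volume T with hSdef
  set P := ∑ T ∈ 𝕋, ∑ T' ∈ 𝕋, volume (T ∩ T') with hPdef
  have hSfin : S ≠ ⊤ := (ENNReal.sum_lt_top.mpr fun T hT => lt_top_iff_ne_top.mpr (hfin T hT)).ne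
  have hUfin : volume U ≠ ⊤ := by
    apply ne_top_of_le_ne_top hSfin
    exact measure_biUnion_finset_le 𝕋 id
  have hUpos : 0 < volume U := by
    obtain ⟨T₀, hT₀⟩ := h𝕋ne
    calc (0:ℝ≥0∞) < ENNReal.ofReal (2*δ) := by
          rw [ENNReal.ofReal_pos]; positivity
      _ ≤ volume T₀ := hlowE T₀ hT₀
      _ ≤ volume U := measure_mono (fun y hy => Set.mem_biUnion hT₀ hy)
  set Klog : ℕ := ⌊Real.logb 2 δ⁻¹⌋₊ + 1 with hKlogdef
  -- P ≤ card * bound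
  have hQ : ∀ T ∈ 𝕋, ∑ T' ∈ 𝕋, volume (T ∩ T')
      ≤ ENNReal.ofReal (320 * ((Klog : ℕ) + 1) * δ) := by
    intro T hT
    have hQfin : ∀ T' ∈ 𝕋, volume (T ∩ T') ≠ ⊤ := fun T' hT' =>
      (lt_of_le_of_lt (measure_mono Set.inter_subset_right)
        (lt_top_iff_ne_top.mpr (hfin T' hT'))).ne
    have hsumfin : ∑ T' ∈ 𝕋, volume (T ∩ T') ≠ ⊤ :=
      (ENNReal.sum_lt_top.mpr fun T' hT' => lt_top_iff_ne_top.mpr (hQfin T' hT')).ne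
    rw [ENNReal.le_ofReal_iff_toReal_le hsumfin (by positivity)]
    rw [ENNReal.toReal_sum hQfin]
    exact overlap_sum_bound hδ0 hδ1 𝕋 x v hv heq hdens hT
  have hP : P ≤ (𝕋.card : ℝ≥0∞) * ENNReal.ofReal (320 * ((Klog : ℕ) + 1) * δ) := by
    calc P ≤ ∑ _T ∈ 𝕋, ENNReal.ofReal (320 * ((Klog : ℕ) + 1) * δ) := Finset.sum_le_sum hQ
      _ = (𝕋.card : ℝ≥0∞) * ENNReal.ofReal (320 * ((Klog : ℕ) + 1) * δ) := by
          rw [Finset.sum_const, nsmul_eq_mul]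
  have hSn : (𝕋.card : ℝ≥0∞) * ENNReal.ofReal (2*δ) ≤ S := by
    calc (𝕋.card : ℝ≥0∞) * ENNReal.ofReal (2*δ)
        = ∑ _T ∈ 𝕋, ENNReal.ofReal (2*δ) := by rw [Finset.sum_const, nsmul_eq_mul]
      _ ≤ S := Finset.sum_le_sum hlowE
  set A : ℝ≥0∞ := ENNReal.ofReal (160 * ((Klog : ℕ) + 1)) with hAdef
  have hPA : P ≤ A * S := by
    calc P ≤ (𝕋.card : ℝ≥0∞) * ENNReal.ofReal (320 * ((Klog : ℕ) + 1) * δ) := hP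
      _ = A * ((𝕋.card : ℝ≥0∞) * ENNReal.ofReal (2*δ)) := by
          have hsplit : ENNReal.ofReal (320 * ((Klog : ℕ) + 1) * δ)
              = ENNReal.ofReal (160 * ((Klog : ℕ) + 1)) * ENNReal.ofReal (2*δ) := by
            rw [← ENNReal.ofReal_mul (by positivity)]
            congr 1
            ring
          rw [hsplit, hAdef]
          ring
      _ ≤ A * S := mul_le_mul_right hSn A
  have hkey : S ≤ A * volume U := by
    by_cases hS0 : S = 0
    · rw [hS0]; exact zero_le
    · have hsq : S * S ≤ (A * volume U) * S := by
        calc S * S = S^2 := (pow_two S).symm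
          _ ≤ volume U * P := cauchy_schwarz_step 𝕋 hmeas
          _ ≤ volume U * (A * S) := mul_le_mul_right hPA _
          _ = (A * volume U) * S := by ring
      exact (ENNReal.mul_le_mul_iff_left hS0 hSfin).mp hsq
  -- convert to reals
  have hU0 : 0 < (volume U).toReal := ENNReal.toReal_pos hUpos.ne' hUfin
  have hmult : mult 𝕋 ≤ 160 * ((Klog : ℕ) + 1) := by
    rw [mult, div_le_iff₀ hU0]
    have h1 : (∑ T ∈ 𝕋, (volume T).toReal) = S.toReal := (ENNReal.toReal_sum hfin).symm
    rw [h1]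
    have h2 : S.toReal ≤ (A * volume U).toReal :=
      ENNReal.toReal_mono (by rw [hAdef]; exact ENNReal.mul_ne_top ENNReal.ofReal_ne_top hUfin) hkey
    rw [ENNReal.toReal_mul, hAdef, ENNReal.toReal_ofReal (by positivity)] at h2
    exact h2
  -- the numerics: 160 (Klog + 1) ≤ (320/ε + 320) δ^(-ε)
  have hδinv1 : (1:ℝ) ≤ δ⁻¹ := by
    have h := mul_inv_cancel₀ (ne_of_gt hδ0)
    nlinarith [inv_pos.mpr hδ0]
  have hlog0 : 0 ≤ Real.log δ⁻¹ := Real.log_nonneg hδinv1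
  have hlogb0 : 0 ≤ Real.logb 2 δ⁻¹ := Real.logb_nonneg (by norm_num) hδinv1
  have hfloor : (⌊Real.logb 2 δ⁻¹⌋₊ : ℝ) ≤ Real.logb 2 δ⁻¹ := Nat.floor_le hlogb0
  have hK1 : ((Klog : ℕ) : ℝ) + 1 ≤ Real.logb 2 δ⁻¹ + 2 := by
    rw [hKlogdef]; push_cast; linarith
  have hlog2 : (0.6931471803 : ℝ) < Real.log 2 := Real.log_two_gt_d9
  have hlogb_le : Real.logb 2 δ⁻¹ ≤ 2 * Real.log δ⁻¹ := by
    rw [Real.logb, div_le_iff₀ (by linarith)]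
    nlinarith
  set Aε : ℝ := δ ^ (-ε) with hA
  have hApos : 0 < Aε := Real.rpow_pos_of_pos hδ0 _
  have hA1 : 1 ≤ Aε := by
    rw [hA, Real.rpow_neg hδ0.le]
    have hle1 : δ ^ ε ≤ 1 := Real.rpow_le_one hδ0.le hδ1.le hε.le
    have hpow_pos : 0 < δ ^ ε := Real.rpow_pos_of_pos hδ0 _
    rw [le_inv_comm₀ one_pos hpow_pos]
    simpa using hle1
  have hLA : Real.log δ⁻¹ * ε ≤ Aε := by
    have hlogr : Real.log Aε = -ε * Real.log δ := by rw [hA]; exact Real.log_rpow hδ0 _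
    have hsub := Real.log_le_sub_one_of_pos hApos
    rw [hlogr] at hsub
    rw [Real.log_inv]
    nlinarith
  have e1 : (320 / ε + 320) * Aε = 320 * (Aε / ε) + 320 * Aε := by
    field_simp
  have hLdiv : Real.log δ⁻¹ ≤ Aε / ε := (le_div_iff₀ hε).mpr hLA
  calc mult 𝕋 ≤ 160 * ((Klog : ℕ) + 1) := hmult
    _ ≤ 160 * (Real.logb 2 δ⁻¹ + 2) := by linarith
    _ ≤ 160 * (2 * Real.log δ⁻¹ + 2) := by linarith
    _ ≤ 320 * (Aε / ε) + 320 * Aε := by linarith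
    _ = (320 / ε + 320) * Aε := e1.symm
end
end

section
/- Let H = {(z₁,z₂,z₃) ∈ ℂ³ : |z₁|² + |z₂|² − |z₃|² = 1}. For every point p ∈ H there exist infinitely many complex affine lines L ⊆ ℂ³ with p ∈ L and L ⊆ H. -/
open Complex ComplexConjugate

/-- The Heisenberg-group hypersurface `H ⊆ ℂ³`. -/
def Heis : Set (Fin 3 → ℂ) :=
  {z | ‖z 0‖ ^ 2 + ‖z 1‖ ^ 2 - ‖z 2‖ ^ 2 = 1}

/-- A complex affine line in `ℂ³`: a coset `p + ℂv` with `v ≠ 0`. -/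
def IsComplexLine (L : Set (Fin 3 → ℂ)) : Prop :=
  ∃ p v : Fin 3 → ℂ, v ≠ 0 ∧ L = {q | ∃ t : ℂ, q = p + t • v}

/-- Through every point of the Heisenberg hypersurface `H` there pass infinitely many
complex affine lines contained in `H`. -/
theorem heisenberg_lines_through_every_point :
    ∀ p ∈ Heis,
      {L : Set (Fin 3 → ℂ) | IsComplexLine L ∧ p ∈ L ∧ L ⊆ Heis}.Infinite := by
  intro p hp
  have hC : p 0 * conj (p 0) + p 1 * conj (p 1) - p 2 * conj (p 2) = 1 := by
    have h' : ((‖p 0‖ ^ 2 + ‖p 1‖ ^ 2 - ‖p 2‖ ^ 2 : ℝ) : ℂ) = 1 := by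
      rw [hp]; norm_num
    rw [mul_conj', mul_conj', mul_conj']
    push_cast at h' ⊢
    linear_combination h'
  set v : ℕ → (Fin 3 → ℂ) := fun n =>
    ![((n : ℂ) - Complex.I) * conj (p 1) + ((n : ℂ) + Complex.I) * p 0 * conj (p 2),
      -(((n : ℂ) - Complex.I) * conj (p 0)) + ((n : ℂ) + Complex.I) * p 1 * conj (p 2),
      ((n : ℂ) + Complex.I) * (1 + p 2 * conj (p 2))] with hv
  have hS : (1 : ℂ) + p 2 * conj (p 2) ≠ 0 := by
    rw [Complex.mul_conj]
    intro h
    have := congrArg Complex.re h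
    simp at this
    nlinarith [Complex.normSq_nonneg (p 2), this]
  have hnI : ∀ n : ℕ, ((n : ℂ) + Complex.I) ≠ 0 := by
    intro n h
    have := congrArg Complex.im h
    simp at this
  apply Set.infinite_of_injective_forall_mem
    (f := fun n : ℕ => {q | ∃ t : ℂ, q = p + t • v n})
  case hi => -- injectivity
    intro m n hmn
    have hmem : p + v m ∈ {q | ∃ t : ℂ, q = p + t • v n} :=
      (Set.ext_iff.mp hmn (p + v m)).mp ⟨1, by simp⟩
    obtain ⟨t, ht⟩ := hmem
    have hvt : v m = t • v n := by
      have := ht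
      funext i
      have := congrFun this i
      simpa [add_right_inj] using this
    have e0 := congrFun hvt 0
    have e1 := congrFun hvt 1
    have e2 := congrFun hvt 2
    simp only [hv, Matrix.cons_val_zero, Matrix.cons_val_one, Matrix.head_cons,
      Matrix.cons_val_two, Matrix.tail_cons, Pi.smul_apply, smul_eq_mul] at e0 e1 e2
    -- from e2 : (m+I) = t (n+I)
    have h2 : ((m : ℂ) + Complex.I) = t * ((n : ℂ) + Complex.I) :=
      mul_right_cancel₀ hS (by linear_combination e2)
    -- (m-I - t(n-I)) * conj a = 0, and same with conj b
    have hb : ((m : ℂ) - Complex.I - t * ((n : ℂ) - Complex.I)) * conj (p 1) = 0 := by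
      linear_combination e0 - (p 0 * conj (p 2)) * h2
    have ha : ((m : ℂ) - Complex.I - t * ((n : ℂ) - Complex.I)) * conj (p 0) = 0 := by
      linear_combination -e1 + (p 1 * conj (p 2)) * h2
    have hsum : ((m : ℂ) - Complex.I - t * ((n : ℂ) - Complex.I)) * (1 + p 2 * conj (p 2)) = 0 := by
      linear_combination (-(((m : ℂ) - Complex.I - t * ((n : ℂ) - Complex.I)))) * hC
        + p 0 * ha + p 1 * hb
    have h1 : ((m : ℂ) - Complex.I) = t * ((n : ℂ) - Complex.I) := by
      have h := (mul_eq_zero.mp hsum).resolve_right hS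
      linear_combination h
    have ht1 : t = 1 := by
      have h2I : (2 * Complex.I : ℂ) ≠ 0 := by
        simp [Complex.I_ne_zero]
      have : t * (2 * Complex.I) = 1 * (2 * Complex.I) := by
        linear_combination h1 - h2
      exact mul_right_cancel₀ h2I this
    have : (m : ℂ) = (n : ℂ) := by
      rw [ht1] at h2
      linear_combination h2
    exact_mod_cast this
  case hf => -- membership
    intro n
    refine ⟨⟨p, v n, ?_, rfl⟩, ⟨0, by simp⟩, ?_⟩
    · intro h
      have := congrFun h 2
      simp only [hv, Matrix.cons_val_two, Matrix.tail_cons, Matrix.head_cons, Pi.zero_apply] at this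
      exact (mul_ne_zero (hnI n) hS) this
    · rintro q ⟨t, rfl⟩
      show _ ∈ Heis
      simp only [Heis, Set.mem_setOf_eq, Pi.add_apply, Pi.smul_apply, smul_eq_mul, hv,
        Matrix.cons_val_zero, Matrix.cons_val_one, Matrix.head_cons,
        Matrix.cons_val_two, Matrix.tail_cons]
      rw [← Complex.ofReal_inj]
      push_cast
      rw [← mul_conj', ← mul_conj', ← mul_conj']
      simp only [map_add, map_mul, map_sub, map_neg, map_one, Complex.conj_conj,
        Complex.conj_I, map_natCast]
      linear_combination hC * (1 + t * conj t * ((n : ℂ) - Complex.I) * ((n : ℂ) + Complex.I)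
        * (1 + p 2 * conj (p 2)) + conj t * ((n : ℂ) - Complex.I) * p 2
        + t * ((n : ℂ) + Complex.I) * conj (p 2))
end
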